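/- arXiv:1709.07797 — 2 statements merged into one kernel-verified Lean document; each statement's English description precedes it below -/
import Mathlib

section
/- Let α₁,…,α_n be positive real numbers and let Q ⊂ ℝⁿ be the set of all vertices of the axis-aligned box with these side lengths, i.e. Q = { Σ_{i∈I} α_i e_i : I ⊆ {1,…,n} } where e_i are the standard basis vectors. Then every piecewise-C¹ path γ from the origin to the far corner p = Σ_{i=1}^n α_i e_i satisfies ℓ(γ) ≥ (1/4) Σ_{i=1}^n α_i², where ℓ is the nearest-neighbor path length with respect to Q. Consequently d_N(0, p) = Σ_{i=1}^n α_i² = d₂(0, p). -/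
open scoped BigOperators
open MeasureTheory

noncomputable section

/-- Points of `ℝ^d`. -/
abbrev Pt (d : ℕ) : Type := EuclideanSpace ℝ (Fin d)

/-- The edge-squared metric on a point set `P ⊆ ℝ^d`: the infimum over finite chains of points
of `P` from `a` to `b` of the sum of squared Euclidean lengths of the steps. -/
noncomputable def edgeSq {d : ℕ} (P : Set (Pt d)) (a b : Pt d) : ℝ :=
  sInf {c : ℝ | ∃ (k : ℕ) (p : Fin (k + 1) → Pt d), p 0 = a ∧ p (Fin.last k) = b ∧
    (∀ i, p i ∈ P) ∧ c = ∑ i : Fin k, ‖p i.succ - p i.castSucc‖ ^ 2}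

/-- A path `γ : [0,1] → ℝ^d` is piecewise-C¹ if it is continuous on `[0,1]` and there is a
partition `0 = t₀ < t₁ < ⋯ < t_m = 1` such that `γ` is `C¹` on each subinterval. -/
def PiecewiseC1 {d : ℕ} (γ : ℝ → Pt d) : Prop :=
  ContinuousOn γ (Set.Icc 0 1) ∧
  ∃ (m : ℕ) (t : Fin (m + 1) → ℝ), StrictMono t ∧ t 0 = 0 ∧ t (Fin.last m) = 1 ∧
    ∀ i : Fin m, ContDiffOn ℝ 1 γ (Set.Icc (t i.castSucc) (t i.succ))

/-- The nearest-neighbor length of a path: `ℓ(γ) = ∫₀¹ r_P(γ(t)) ‖γ'(t)‖ dt`, where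
`r_P(z) = min_{x ∈ P} ‖x - z‖` is the distance to the nearest point of `P`. -/
noncomputable def nnLength {d : ℕ} (P : Set (Pt d)) (γ : ℝ → Pt d) : ℝ :=
  ∫ t in (0:ℝ)..1, Metric.infDist (γ t) P * ‖deriv γ t‖

/-- The nearest-neighbor geodesic distance:
`d_N(a,b) = 4 ⬝ inf { ℓ(γ) | γ piecewise-C¹ path from a to b }`. -/
noncomputable def nnGeo {d : ℕ} (P : Set (Pt d)) (a b : Pt d) : ℝ :=
  4 * sInf {l : ℝ | ∃ γ : ℝ → Pt d, PiecewiseC1 γ ∧ γ 0 = a ∧ γ 1 = b ∧ l = nnLength P γ}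

/-! The lower bound is a calibration argument. Let `m_a(x) = min |x| |a - x|` be the distance
from `x` to `{0, a}` and `F_a(x) = ∫₀ˣ m_a`, so that `F_a(a) = a²/4` for `a ≥ 0`. The potential
`G(z) = ∑ᵢ F_{αᵢ}(zᵢ)` has gradient `(m_{αᵢ}(zᵢ))ᵢ`, whose norm is at most `r_Q(z)` because every
vertex has its `i`-th coordinate in `{0, αᵢ}`. Hence `(G ∘ γ)' ≤ r_Q(γ) ‖γ'‖` on each `C¹` piece,
and integrating gives `ℓ(γ) ≥ G(p) - G(0) = ∑ αᵢ²/4`. The straight segment from `0` to `p`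
attains the bound, since its distance to the nearer endpoint is `min(t, 1 - t) ‖p‖`.

For `d₂`, a chain of vertices has to change each coordinate `i` at least once, at cost `αᵢ²`
in that coordinate, so no chain beats the single edge from `0` to `p`. -/

open Set Metric intervalIntegral

section EdgePotential

def edgeDist (a x : ℝ) : ℝ := min |x| |a - x|

lemma continuous_edgeDist (a : ℝ) : Continuous (edgeDist a) := by
  unfold edgeDist; fun_prop

lemma edgeDist_nonneg (a x : ℝ) : 0 ≤ edgeDist a x := le_min (abs_nonneg _) (abs_nonneg _)

lemma edgeDist_le_abs_sub {a x q : ℝ} (hq : q = 0 ∨ q = a) : edgeDist a x ≤ |x - q| := by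
  rcases hq with rfl | rfl
  · simp [edgeDist]
  · simp [edgeDist, abs_sub_comm]

lemma edgeDist_of_le_half {a x : ℝ} (h0 : 0 ≤ x) (h : x ≤ a / 2) : edgeDist a x = x := by
  rw [edgeDist, abs_of_nonneg h0, abs_of_nonneg (by linarith), min_eq_left (by linarith)]

lemma edgeDist_sub_left (a x : ℝ) : edgeDist a (a - x) = edgeDist a x := by
  simp [edgeDist, min_comm]

def edgePotential (a x : ℝ) : ℝ := ∫ s in (0 : ℝ)..x, edgeDist a s

lemma hasDerivAt_edgePotential (a x : ℝ) : HasDerivAt (edgePotential a) (edgeDist a x) x :=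
  integral_hasDerivAt_right ((continuous_edgeDist a).intervalIntegrable _ _)
    ((continuous_edgeDist a).stronglyMeasurableAtFilter _ _) (continuous_edgeDist a).continuousAt

lemma edgePotential_zero (a : ℝ) : edgePotential a 0 = 0 := integral_same

lemma edgePotential_self {a : ℝ} (ha : 0 ≤ a) : edgePotential a a = a ^ 2 / 4 := by
  have hint := (continuous_edgeDist a).intervalIntegrable (μ := volume)
  have first_half : ∫ s in (0 : ℝ)..a / 2, edgeDist a s = a ^ 2 / 8 := by
    rw [integral_congr (g := fun s => s) fun s hs => ?_, integral_id]
    · ring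
    rw [uIcc_of_le (by linarith)] at hs
    exact edgeDist_of_le_half hs.1 hs.2
  have second_half : ∫ s in a / 2..a, edgeDist a s = a ^ 2 / 8 := by
    calc ∫ s in a / 2..a, edgeDist a s = ∫ s in a / 2..a, edgeDist a (a - s) := by
          simp only [edgeDist_sub_left]
      _ = a ^ 2 / 8 := by rw [integral_comp_sub_left (edgeDist a), sub_self, sub_half, first_half]
  rw [edgePotential, ← integral_add_adjacent_intervals (hint 0 (a / 2)) (hint (a / 2) a),
    first_half, second_half]
  ring

end EdgePotential

lemma sum_succ_sub_castSucc {k : ℕ} (x : Fin (k + 1) → ℝ) :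
    ∑ j : Fin k, (x j.succ - x j.castSucc) = x (Fin.last k) - x 0 := by
  induction k with
  | zero => simp
  | succ k ih =>
    rw [Fin.sum_univ_castSucc]
    simp_rw [Fin.succ_castSucc]
    rw [ih (fun j => x j.castSucc)]
    simp

lemma sq_sub_le_sum_sq_sub_of_forall_eq_or_eq {k : ℕ} {x : Fin (k + 1) → ℝ} {b c : ℝ}
    (hx : ∀ j, x j = b ∨ x j = c) :
    (x (Fin.last k) - x 0) ^ 2 ≤ ∑ j : Fin k, (x j.succ - x j.castSucc) ^ 2 := by
  -- every step is `0` or `±(c - b)`, so its square is `|c - b|` times its length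
  have hstep : ∀ j : Fin k,
      (x j.succ - x j.castSucc) ^ 2 = |c - b| * |x j.succ - x j.castSucc| := by
    intro j
    rcases hx j.succ with h | h <;> rcases hx j.castSucc with h' | h' <;>
      simp [h, h', abs_sub_comm, sq_abs, ← sq, sub_sq_comm]
  have hends : |x (Fin.last k) - x 0| ≤ |c - b| := by
    rcases hx (Fin.last k) with h | h <;> rcases hx 0 with h' | h' <;>
      simp [h, h', abs_sub_comm]
  calc (x (Fin.last k) - x 0) ^ 2 = |x (Fin.last k) - x 0| * |x (Fin.last k) - x 0| := by
        rw [abs_mul_abs_self, sq]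
    _ ≤ |c - b| * ∑ j : Fin k, |x j.succ - x j.castSucc| := by
        gcongr
        rw [← sum_succ_sub_castSucc]
        exact Finset.abs_sum_le_sum_abs _ _
    _ = ∑ j : Fin k, (x j.succ - x j.castSucc) ^ 2 := by
        rw [Finset.mul_sum]
        simp_rw [hstep]

section PiecewiseFTC

variable {E : Type*} [NormedAddCommGroup E] [NormedSpace ℝ E] {P : Set E}

lemma hasDerivAt_of_contDiffOn_Icc {γ : ℝ → E} {a b t : ℝ}
    (hγ : ContDiffOn ℝ 1 γ (Icc a b)) (ht : t ∈ Ioo a b) : HasDerivAt γ (deriv γ t) t :=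
  ((hγ.differentiableOn one_ne_zero t (Ioo_subset_Icc_self ht)).differentiableAt
    (Icc_mem_nhds ht.1 ht.2)).hasDerivAt

lemma intervalIntegrable_infDist_mul_norm_deriv {γ : ℝ → E} {a b : ℝ} (hab : a < b)
    (hγ : ContDiffOn ℝ 1 γ (Icc a b)) :
    IntervalIntegrable (fun t => infDist (γ t) P * ‖deriv γ t‖) volume a b := by
  have hcont : ContinuousOn (fun t => infDist (γ t) P * ‖derivWithin γ (Icc a b) t‖) (Icc a b) :=
    ((continuous_infDist_pt P).comp_continuousOn hγ.continuousOn).mul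
      (hγ.continuousOn_derivWithin (uniqueDiffOn_Icc hab) le_rfl).norm
  rw [intervalIntegrable_iff_integrableOn_Ioo_of_le hab.le]
  refine (hcont.integrableOn_Icc.mono_set Ioo_subset_Icc_self).congr_fun (fun t ht => ?_)
    measurableSet_Ioo
  simp only [derivWithin_of_mem_nhds (Icc_mem_nhds ht.1 ht.2)]

lemma sub_le_integral_of_contDiffOn {Φ : E → ℝ} (hΦ : Differentiable ℝ Φ)
    (hΦP : ∀ z, ‖fderiv ℝ Φ z‖ ≤ infDist z P) {γ : ℝ → E} {a b : ℝ} (hab : a < b)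
    (hγ : ContDiffOn ℝ 1 γ (Icc a b)) :
    Φ (γ b) - Φ (γ a) ≤ ∫ t in a..b, infDist (γ t) P * ‖deriv γ t‖ := by
  refine sub_le_integral_of_hasDeriv_right_of_le (g' := fun t => fderiv ℝ Φ (γ t) (deriv γ t))
    hab.le (hΦ.continuous.comp_continuousOn hγ.continuousOn) (fun t ht => ?_)
    ((intervalIntegrable_iff_integrableOn_Icc_of_le hab.le).1
      (intervalIntegrable_infDist_mul_norm_deriv hab hγ)) (fun t _ => ?_)
  · exact ((hΦ (γ t)).hasFDerivAt.comp_hasDerivAt t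
      (hasDerivAt_of_contDiffOn_Icc hγ ht)).hasDerivWithinAt
  · calc fderiv ℝ Φ (γ t) (deriv γ t) ≤ ‖fderiv ℝ Φ (γ t)‖ * ‖deriv γ t‖ :=
          (le_abs_self _).trans ((fderiv ℝ Φ (γ t)).le_opNorm _)
      _ ≤ infDist (γ t) P * ‖deriv γ t‖ := by gcongr; exact hΦP _

lemma sub_le_integral_of_partition {m : ℕ} {t : Fin (m + 1) → ℝ} {g f : ℝ → ℝ}
    (hint : ∀ i : Fin m, IntervalIntegrable f volume (t i.castSucc) (t i.succ))
    (hle : ∀ i : Fin m, g (t i.succ) - g (t i.castSucc) ≤ ∫ x in t i.castSucc..t i.succ, f x) :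
    IntervalIntegrable f volume (t 0) (t (Fin.last m)) ∧
      g (t (Fin.last m)) - g (t 0) ≤ ∫ x in t 0..t (Fin.last m), f x := by
  induction m with
  | zero => simp
  | succ m ih =>
    obtain ⟨hint', hle'⟩ := ih (t := fun i => t i.castSucc)
      (fun i => by simpa only [Fin.succ_castSucc] using hint i.castSucc)
      (fun i => by simpa only [Fin.succ_castSucc] using hle i.castSucc)
    have hint_last := hint (Fin.last m)
    have hle_last := hle (Fin.last m)
    simp only [Fin.castSucc_zero, Fin.succ_last] at hint' hle' hint_last hle_last ⊢
    refine ⟨hint'.trans hint_last, ?_⟩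
    rw [← integral_add_adjacent_intervals hint' hint_last]
    linarith

end PiecewiseFTC

section NearestNeighbor

variable {d : ℕ} {P : Set (Pt d)}

lemma nnLength_nonneg (γ : ℝ → Pt d) : 0 ≤ nnLength P γ :=
  integral_nonneg zero_le_one fun _ _ => mul_nonneg infDist_nonneg (norm_nonneg _)

lemma PiecewiseC1.of_contDiffOn {γ : ℝ → Pt d} (hγ : ContDiffOn ℝ 1 γ (Icc 0 1)) :
    PiecewiseC1 γ :=
  ⟨hγ.continuousOn, 1, ![0, 1], by simp [Fin.strictMono_iff_lt_succ], rfl, rfl,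
    fun i => by fin_cases i; simpa using hγ⟩

lemma piecewiseC1_lineMap (a b : Pt d) : PiecewiseC1 (AffineMap.lineMap a b : ℝ → Pt d) :=
  .of_contDiffOn (AffineMap.contDiff_lineMap a b).contDiffOn

lemma sub_le_nnLength {Φ : Pt d → ℝ} (hΦ : Differentiable ℝ Φ)
    (hΦP : ∀ z, ‖fderiv ℝ Φ z‖ ≤ infDist z P) {γ : ℝ → Pt d} (hγ : PiecewiseC1 γ) :
    Φ (γ 1) - Φ (γ 0) ≤ nnLength P γ := by
  obtain ⟨-, m, t, hmono, ht0, ht1, hpiece⟩ := hγ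
  have hlt : ∀ i : Fin m, t i.castSucc < t i.succ := fun i => hmono Fin.castSucc_lt_succ
  have h := (sub_le_integral_of_partition (g := fun s => Φ (γ s))
    (fun i => intervalIntegrable_infDist_mul_norm_deriv (P := P) (hlt i) (hpiece i))
    (fun i => sub_le_integral_of_contDiffOn hΦ hΦP (hlt i) (hpiece i))).2
  rwa [ht0, ht1] at h

lemma le_nnGeo {a b : Pt d} {c : ℝ}
    (h : ∀ γ : ℝ → Pt d, PiecewiseC1 γ → γ 0 = a → γ 1 = b → c ≤ nnLength P γ) :
    4 * c ≤ nnGeo P a b := by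
  rw [nnGeo]
  gcongr
  refine le_csInf ⟨_, _, piecewiseC1_lineMap a b, by simp, by simp, rfl⟩ ?_
  rintro _ ⟨γ, hγ, h0, h1, rfl⟩
  exact h γ hγ h0 h1

lemma nnLength_lineMap_le {a b : Pt d} (ha : a ∈ P) (hb : b ∈ P) :
    nnLength P (AffineMap.lineMap a b) ≤ ‖b - a‖ ^ 2 / 4 := by
  have hdist : ∀ t : ℝ, infDist (AffineMap.lineMap a b t) P ≤ edgeDist 1 t * dist a b := by
    intro t
    rw [edgeDist, min_mul_of_nonneg _ _ dist_nonneg, ← Real.norm_eq_abs, ← Real.norm_eq_abs,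
      ← dist_lineMap_left, ← dist_lineMap_right]
    exact le_min (infDist_le_dist_of_mem ha) (infDist_le_dist_of_mem hb)
  calc nnLength P (AffineMap.lineMap a b)
      = ∫ t in (0 : ℝ)..1, infDist (AffineMap.lineMap a b t) P * ‖b - a‖ := by
        simp only [nnLength, AffineMap.hasDerivAt_lineMap.deriv]
    _ ≤ ∫ t in (0 : ℝ)..1, edgeDist 1 t * ‖b - a‖ * ‖b - a‖ := by
        refine integral_mono_on zero_le_one ?_ ?_ fun t _ => ?_
        · exact ((continuous_infDist_pt P).comp AffineMap.lineMap_continuous).mul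
            continuous_const |>.intervalIntegrable _ _
        · exact ((continuous_edgeDist 1).mul continuous_const).mul
            continuous_const |>.intervalIntegrable _ _
        · rw [← dist_eq_norm']
          gcongr
          exact hdist t
    _ = ‖b - a‖ ^ 2 / 4 := by
        rw [intervalIntegral.integral_mul_const, intervalIntegral.integral_mul_const,
          ← edgePotential, edgePotential_self zero_le_one]
        ring

lemma nnGeo_le_norm_sub_sq {a b : Pt d} (ha : a ∈ P) (hb : b ∈ P) :
    nnGeo P a b ≤ ‖b - a‖ ^ 2 := by
  rw [nnGeo]
  calc 4 * sInf _ ≤ 4 * nnLength P (AffineMap.lineMap a b) := by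
        gcongr
        exact csInf_le ⟨0, by rintro _ ⟨γ, -, -, -, rfl⟩; exact nnLength_nonneg γ⟩
          ⟨_, piecewiseC1_lineMap a b, by simp, by simp, rfl⟩
    _ ≤ ‖b - a‖ ^ 2 := by linarith [nnLength_lineMap_le ha hb]

end NearestNeighbor

section Box

variable {n : ℕ} (α : Fin n → ℝ)

def boxVertices : Set (Pt n) :=
  {q | ∃ I : Finset (Fin n), q = ∑ i ∈ I, α i • EuclideanSpace.single i (1 : ℝ)}

lemma sum_smul_single_apply (I : Finset (Fin n)) (j : Fin n) :
    (∑ i ∈ I, α i • EuclideanSpace.single i (1 : ℝ)) j = if j ∈ I then α j else 0 := by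
  simp [Pi.single_apply]

lemma zero_mem_boxVertices : (0 : Pt n) ∈ boxVertices α := ⟨∅, by simp⟩

lemma corner_mem_boxVertices :
    ∑ i, α i • EuclideanSpace.single i (1 : ℝ) ∈ boxVertices α := ⟨Finset.univ, rfl⟩

lemma norm_corner_sq : ‖∑ i, α i • EuclideanSpace.single i (1 : ℝ)‖ ^ 2 = ∑ i, α i ^ 2 := by
  simp [EuclideanSpace.real_norm_sq_eq, sum_smul_single_apply]

variable {α}

lemma apply_eq_zero_or_eq_of_mem_boxVertices {q : Pt n} (hq : q ∈ boxVertices α) (i : Fin n) :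
    q i = 0 ∨ q i = α i := by
  obtain ⟨I, rfl⟩ := hq
  rw [sum_smul_single_apply]
  split_ifs <;> simp

lemma norm_sub_sq_le_sum_norm_sub_sq {k : ℕ} {q : Fin (k + 1) → Pt n}
    (hq : ∀ j, q j ∈ boxVertices α) :
    ‖q (Fin.last k) - q 0‖ ^ 2 ≤ ∑ j : Fin k, ‖q j.succ - q j.castSucc‖ ^ 2 := by
  simp only [EuclideanSpace.real_norm_sq_eq, PiLp.sub_apply]
  rw [Finset.sum_comm]
  exact Finset.sum_le_sum fun i _ => sq_sub_le_sum_sq_sub_of_forall_eq_or_eq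
    fun j => apply_eq_zero_or_eq_of_mem_boxVertices (hq j) i

lemma edgeSq_boxVertices {a b : Pt n} (ha : a ∈ boxVertices α) (hb : b ∈ boxVertices α) :
    edgeSq (boxVertices α) a b = ‖b - a‖ ^ 2 := by
  refine IsLeast.csInf_eq ⟨⟨1, ![a, b], rfl, rfl, ?_, by simp⟩, ?_⟩
  · simp [Fin.forall_fin_two, ha, hb]
  · rintro _ ⟨k, q, rfl, rfl, hq, rfl⟩
    exact norm_sub_sq_le_sum_norm_sub_sq hq

variable (α)

def edgeGrad (z : Pt n) : Pt n := WithLp.toLp 2 fun i => edgeDist (α i) (z i)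

def boxPotential (z : Pt n) : ℝ := ∑ i, edgePotential (α i) (z i)

lemma hasFDerivAt_boxPotential (z : Pt n) :
    HasFDerivAt (boxPotential α) (innerSL ℝ (edgeGrad α z)) z := by
  have h := HasFDerivAt.fun_sum (u := Finset.univ) fun i _ =>
    (hasDerivAt_edgePotential (α i) (z i)).comp_hasFDerivAt z
      (EuclideanSpace.proj (𝕜 := ℝ) i).hasFDerivAt
  refine h.congr_fderiv ?_
  ext v
  simp [edgeGrad, PiLp.inner_apply, mul_comm]

lemma boxPotential_zero : boxPotential α 0 = 0 := by
  simp [boxPotential, edgePotential_zero]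

lemma boxPotential_corner (hα : ∀ i, 0 ≤ α i) :
    boxPotential α (∑ i, α i • EuclideanSpace.single i (1 : ℝ)) = ∑ i, α i ^ 2 / 4 := by
  simp [boxPotential, sum_smul_single_apply, edgePotential_self (hα _)]

variable {α}

lemma norm_edgeGrad_le_infDist (z : Pt n) : ‖edgeGrad α z‖ ≤ infDist z (boxVertices α) := by
  refine (le_infDist ⟨0, zero_mem_boxVertices α⟩).2 fun q hq => ?_
  rw [EuclideanSpace.norm_eq, EuclideanSpace.dist_eq]
  gcongr with i
  simp only [edgeGrad, Real.norm_eq_abs, abs_of_nonneg (edgeDist_nonneg _ _), Real.dist_eq]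
  exact edgeDist_le_abs_sub (apply_eq_zero_or_eq_of_mem_boxVertices hq i)

lemma one_quarter_sum_sq_le_nnLength (hα : ∀ i, 0 ≤ α i) {γ : ℝ → Pt n} (hγ : PiecewiseC1 γ)
    (h0 : γ 0 = 0) (h1 : γ 1 = ∑ i, α i • EuclideanSpace.single i (1 : ℝ)) :
    1 / 4 * ∑ i, α i ^ 2 ≤ nnLength (boxVertices α) γ := by
  have h := sub_le_nnLength (fun z => (hasFDerivAt_boxPotential α z).differentiableAt)
    (fun z => by
      rw [(hasFDerivAt_boxPotential α z).fderiv, innerSL_apply_norm]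
      exact norm_edgeGrad_le_infDist z) hγ
  rw [h0, h1, boxPotential_corner α hα, boxPotential_zero, sub_zero, ← Finset.sum_div] at h
  linarith

end Box

/-- Let `Q ⊆ ℝⁿ` be the set of vertices of the axis-aligned box with positive
side lengths `α₁, …, α_n`. Every piecewise-C¹ path `γ` from the origin to the far corner
`p = ∑ i, α i • e i` satisfies `ℓ(γ) ≥ (1/4) ∑ i, α i²`; consequently
`d_N(0, p) = ∑ i, α i ² = d₂(0, p)`. -/
theorem box_path_length (n : ℕ) (α : Fin n → ℝ) (hα : ∀ i, 0 < α i)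
    (Q : Set (Pt n))
    (hQ : Q = {q : Pt n | ∃ I : Finset (Fin n),
      q = ∑ i ∈ I, α i • EuclideanSpace.single i (1 : ℝ)})
    (p : Pt n) (hp : p = ∑ i : Fin n, α i • EuclideanSpace.single i (1 : ℝ)) :
    (∀ γ : ℝ → Pt n, PiecewiseC1 γ → γ 0 = 0 → γ 1 = p →
        nnLength Q γ ≥ (1 / 4) * ∑ i : Fin n, α i ^ 2) ∧
    nnGeo Q 0 p = ∑ i : Fin n, α i ^ 2 ∧
    edgeSq Q 0 p = ∑ i : Fin n, α i ^ 2 := by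
  obtain rfl : Q = boxVertices α := hQ
  subst hp
  have hlower := fun γ => one_quarter_sum_sq_le_nnLength (fun i => (hα i).le) (γ := γ)
  have hcorner := corner_mem_boxVertices α
  refine ⟨hlower, le_antisymm ?_ ?_, ?_⟩
  · simpa [norm_corner_sq] using nnGeo_le_norm_sub_sq (zero_mem_boxVertices α) hcorner
  · linarith [le_nnGeo hlower]
  · rw [edgeSq_boxVertices (zero_mem_boxVertices α) hcorner, sub_zero, norm_corner_sq]
end
end

section
/- For every dimension d there is a constant C = C(d) such that for every finite set P ⊂ ℝ^d with |P| = n and every ε ∈ (0,1), there exists a set E of at most C·n·ε^{−d/2} unordered pairs of points of P such that the graph (P, E) with edge weights ‖u − v‖² is a (1+ε)-spanner of the edge-squared metric: for all a, b ∈ P, d₂(a,b) ≤ d_E(a,b) ≤ (1+ε)·d₂(a,b), where d_E is the shortest-path distance in (P, E). -/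
/-! Yao-graph construction. Around each point `u`, split the directions into cones by rounding
the unit vector `(v - u)/‖v - u‖` to a grid of mesh `1/M` with `M ≈ 2√(d/ε)`, so there are
`(2M+1)^d = O(ε^{-d/2})` cones and two directions in one cone have cosine at least `1 - ε/8`;
join `u` to a nearest point `x` in each nonempty cone. For `v` in the cone of such an `x` this
cosine bound gives `‖v - x‖ < ‖v - u‖` and `‖x - u‖² + (1 + ε)‖v - x‖² ≤ (1 + ε)‖v - u‖²`, so
induction on the distance to `v` yields a walk from `u` to `v` of cost at most `(1 + ε)‖v - u‖²`.
Doing this along every step of a chain bounds `spanDist` by `(1 + ε) edgeSq`; conversely every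
walk in the graph is a chain in `P`. -/

open scoped BigOperators
open MeasureTheory

noncomputable section

/-- Shortest-path distance in the graph whose (undirected) edges are the pairs in `E`, with edge
weights `w`. -/
noncomputable def spanDist {d : ℕ} (E : Set (Pt d × Pt d)) (w : Pt d → Pt d → ℝ)
    (a b : Pt d) : ℝ :=
  sInf {c : ℝ | ∃ (k : ℕ) (q : Fin (k + 1) → Pt d), q 0 = a ∧ q (Fin.last k) = b ∧
    (∀ i : Fin k, (q i.castSucc, q i.succ) ∈ E ∨ (q i.succ, q i.castSucc) ∈ E) ∧
    c = ∑ i : Fin k, w (q i.castSucc) (q i.succ)}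

section Walks

variable {α : Type*}

-- `spanDist E w a b` and `edgeSq P a b` are by definition the infima of `walkCosts E w a b` and
-- `chainCosts P a b`.
def walkCosts (E : Set (α × α)) (w : α → α → ℝ) (a b : α) : Set ℝ :=
  {c : ℝ | ∃ (k : ℕ) (q : Fin (k + 1) → α), q 0 = a ∧ q (Fin.last k) = b ∧
    (∀ i : Fin k, (q i.castSucc, q i.succ) ∈ E ∨ (q i.succ, q i.castSucc) ∈ E) ∧
    c = ∑ i : Fin k, w (q i.castSucc) (q i.succ)}

variable {E : Set (α × α)} {w : α → α → ℝ}

lemma zero_mem_walkCosts (a : α) : (0 : ℝ) ∈ walkCosts E w a a :=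
  ⟨0, fun _ => a, rfl, rfl, fun i => i.elim0, by simp⟩

lemma add_mem_walkCosts_of_edge {x y b : α} {c : ℝ} (hxy : (x, y) ∈ E ∨ (y, x) ∈ E)
    (hc : c ∈ walkCosts E w y b) : w x y + c ∈ walkCosts E w x b := by
  obtain ⟨k, q, rfl, hqb, hq, rfl⟩ := hc
  refine ⟨k + 1, Fin.cons x q, rfl, by rwa [← Fin.succ_last, Fin.cons_succ], ?_, ?_⟩
  · intro i
    cases i using Fin.cases with
    | zero => simpa using hxy
    | succ j => simpa [← Fin.succ_castSucc] using hq j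
  · simp [Fin.sum_univ_succ]

lemma add_mem_walkCosts {a m b : α} {c₁ c₂ : ℝ} (h₁ : c₁ ∈ walkCosts E w a m)
    (h₂ : c₂ ∈ walkCosts E w m b) : c₁ + c₂ ∈ walkCosts E w a b := by
  obtain ⟨k, q, rfl, rfl, hq, rfl⟩ := h₁
  induction k with
  | zero => simpa using h₂
  | succ k ih =>
    have hrest := ih (q ∘ Fin.succ) h₂ (fun i => hq i.succ)
    rw [Fin.sum_univ_succ]
    simpa only [add_assoc, Fin.castSucc_zero, Function.comp_apply, Fin.succ_castSucc] using
      add_mem_walkCosts_of_edge (hq 0) hrest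

lemma nonneg_of_mem_walkCosts (hw : ∀ u v, 0 ≤ w u v) {a b : α} {c : ℝ}
    (hc : c ∈ walkCosts E w a b) : 0 ≤ c := by
  obtain ⟨k, q, -, -, -, rfl⟩ := hc
  exact Finset.sum_nonneg fun i _ => hw _ _

end Walks

section Chains

variable {V : Type*} [SeminormedAddCommGroup V]

def chainCosts (P : Set V) (a b : V) : Set ℝ :=
  {c : ℝ | ∃ (k : ℕ) (p : Fin (k + 1) → V), p 0 = a ∧ p (Fin.last k) = b ∧
    (∀ i, p i ∈ P) ∧ c = ∑ i : Fin k, ‖p i.succ - p i.castSucc‖ ^ 2}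

variable {P : Set V}

lemma nonneg_of_mem_chainCosts {a b : V} {c : ℝ} (hc : c ∈ chainCosts P a b) : 0 ≤ c := by
  obtain ⟨k, p, -, -, -, rfl⟩ := hc
  positivity

lemma sq_norm_sub_mem_chainCosts {a b : V} (ha : a ∈ P) (hb : b ∈ P) :
    ‖b - a‖ ^ 2 ∈ chainCosts P a b :=
  ⟨1, ![a, b], rfl, rfl, fun i => by fin_cases i <;> simpa, by simp⟩

lemma walkCosts_subset_chainCosts {E : Set (V × V)} (hE : ∀ e ∈ E, e.1 ∈ P ∧ e.2 ∈ P)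
    {a b : V} (ha : a ∈ P) : walkCosts E (fun u v => ‖u - v‖ ^ 2) a b ⊆ chainCosts P a b := by
  rintro _ ⟨k, q, rfl, hqb, hq, rfl⟩
  refine ⟨k, q, rfl, hqb, fun i => ?_, by simp only [norm_sub_rev]⟩
  cases i using Fin.cases with
  | zero => exact ha
  | succ j => rcases hq j with h | h <;> simp [hE _ h]

lemma exists_walkCosts_le_of_mem_chainCosts {E : Set (V × V)} {w : V → V → ℝ} {t : ℝ}
    (hpair : ∀ u ∈ P, ∀ v ∈ P, ∃ c ∈ walkCosts E w u v, c ≤ t * ‖v - u‖ ^ 2)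
    {a b : V} {c : ℝ} (hc : c ∈ chainCosts P a b) : ∃ c' ∈ walkCosts E w a b, c' ≤ t * c := by
  obtain ⟨k, p, rfl, rfl, hp, rfl⟩ := hc
  induction k with
  | zero => exact ⟨0, zero_mem_walkCosts _, by simp⟩
  | succ k ih =>
    obtain ⟨c₁, hc₁, hc₁le⟩ := hpair _ (hp 0) _ (hp 1)
    obtain ⟨c₂, hc₂, hc₂le⟩ := ih (p ∘ Fin.succ) (fun i => hp _)
    refine ⟨c₁ + c₂, add_mem_walkCosts hc₁ (by simpa [Fin.succ_last] using hc₂), ?_⟩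
    simp only [Function.comp_apply, Fin.succ_castSucc] at hc₂le
    rw [Fin.sum_univ_succ, mul_add]
    simpa using add_le_add hc₁le hc₂le

end Chains

lemma csInf_le_mul_csInf {S T : Set ℝ} {t : ℝ} (ht : 0 < t) (hS : S.Nonempty) (hT : BddBelow T)
    (h : ∀ c ∈ S, ∃ c' ∈ T, c' ≤ t * c) : sInf T ≤ t * sInf S := by
  rw [← div_le_iff₀' ht]
  refine le_csInf hS fun c hc => ?_
  obtain ⟨c', hc', hle⟩ := h c hc
  rw [div_le_iff₀' ht]
  exact (csInf_le hT hc').trans hle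

section Pt

variable {d : ℕ}

lemma edgeSq_le_spanDist {P : Set (Pt d)} {E : Set (Pt d × Pt d)}
    (hE : ∀ e ∈ E, e.1 ∈ P ∧ e.2 ∈ P) {a b : Pt d} (ha : a ∈ P)
    (hne : (walkCosts E (fun u v => ‖u - v‖ ^ 2) a b).Nonempty) :
    edgeSq P a b ≤ spanDist E (fun u v => ‖u - v‖ ^ 2) a b :=
  csInf_le_csInf ⟨0, fun _ hc => nonneg_of_mem_chainCosts hc⟩ hne
    (walkCosts_subset_chainCosts hE ha)

lemma spanDist_le_mul_edgeSq {P : Set (Pt d)} {E : Set (Pt d × Pt d)} {w : Pt d → Pt d → ℝ}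
    (hw : ∀ u v, 0 ≤ w u v) {t : ℝ} (ht : 0 < t)
    (hpair : ∀ u ∈ P, ∀ v ∈ P, ∃ c ∈ walkCosts E w u v, c ≤ t * ‖v - u‖ ^ 2)
    {a b : Pt d} (ha : a ∈ P) (hb : b ∈ P) : spanDist E w a b ≤ t * edgeSq P a b :=
  csInf_le_mul_csInf ht ⟨_, sq_norm_sub_mem_chainCosts ha hb⟩
    ⟨0, fun _ hc => nonneg_of_mem_walkCosts hw hc⟩
    fun _ hc => exists_walkCosts_le_of_mem_chainCosts hpair hc

end Pt

lemma card_filter_lt_lt_of_lt {β : Type*} {s : Finset β} {f : β → ℝ} {x u : β} (hx : x ∈ s)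
    (hxu : f x < f u) : (s.filter (f · < f x)).card < (s.filter (f · < f u)).card := by
  refine Finset.card_lt_card ⟨fun p hp => ?_, fun h => ?_⟩
  · rw [Finset.mem_filter] at hp ⊢
    exact ⟨hp.1, hp.2.trans hxu⟩
  · exact lt_irrefl _ (Finset.mem_filter.1 (h (Finset.mem_filter.2 ⟨hx, hxu⟩))).2

section Yao

variable {V : Type*} [NormedAddCommGroup V] [InnerProductSpace ℝ V]

lemma norm_sub_lt_of_inner_ge {ε : ℝ} (hε : ε < 4) {y z : V} (hz : z ≠ 0) (hzy : ‖z‖ ≤ ‖y‖)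
    (hinner : (1 - ε / 8) * (‖y‖ * ‖z‖) ≤ inner ℝ y z) : ‖y - z‖ < ‖y‖ := by
  have hz0 : 0 < ‖z‖ := norm_pos_iff.2 hz
  have hy0 : 0 < ‖y‖ := hz0.trans_le hzy
  refine lt_of_pow_lt_pow_left₀ 2 hy0.le ?_
  rw [norm_sub_sq_real]
  nlinarith [mul_le_mul_of_nonneg_left hzy hz0.le, mul_pos hy0 hz0]

lemma sq_norm_add_mul_sq_norm_sub_le {ε : ℝ} (hε0 : 0 ≤ ε) (hε3 : ε ≤ 3) {y z : V}
    (hzy : ‖z‖ ≤ ‖y‖) (hinner : (1 - ε / 8) * (‖y‖ * ‖z‖) ≤ inner ℝ y z) :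
    ‖z‖ ^ 2 + (1 + ε) * ‖y - z‖ ^ 2 ≤ (1 + ε) * ‖y‖ ^ 2 := by
  rw [norm_sub_sq_real]
  nlinarith [mul_le_mul_of_nonneg_left hzy (norm_nonneg z),
    mul_nonneg (mul_nonneg hε0 (by linarith : 0 ≤ 3 - ε))
      (mul_nonneg (norm_nonneg y) (norm_nonneg z))]

theorem exists_walkCosts_le_of_cone_cover {P : Finset V} {E : Set (V × V)} {ε : ℝ}
    (hε0 : 0 ≤ ε) (hε3 : ε ≤ 3)
    (hcov : ∀ u ∈ P, ∀ v ∈ P, v ≠ u → ∃ x ∈ P, x ≠ u ∧ (u, x) ∈ E ∧ ‖x - u‖ ≤ ‖v - u‖ ∧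
      (1 - ε / 8) * (‖v - u‖ * ‖x - u‖) ≤ inner ℝ (v - u) (x - u))
    {u v : V} (hu : u ∈ P) (hv : v ∈ P) :
    ∃ c ∈ walkCosts E (fun a b => ‖a - b‖ ^ 2) u v, c ≤ (1 + ε) * ‖v - u‖ ^ 2 := by
  by_cases hvu : v = u
  · subst hvu
    exact ⟨0, zero_mem_walkCosts v, by positivity⟩
  obtain ⟨x, hxP, hxu, hxE, hxv, hinner⟩ := hcov u hu v hv hvu
  have hsub : v - x = (v - u) - (x - u) := (sub_sub_sub_cancel_right v x u).symm
  have hcloser : ‖v - x‖ < ‖v - u‖ := by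
    rw [hsub]
    exact norm_sub_lt_of_inner_ge (by linarith) (sub_ne_zero.2 hxu) hxv hinner
  obtain ⟨c, hc, hcle⟩ := exists_walkCosts_le_of_cone_cover hε0 hε3 hcov hxP hv
  refine ⟨‖u - x‖ ^ 2 + c, add_mem_walkCosts_of_edge (Or.inl hxE) hc, ?_⟩
  rw [norm_sub_rev u x]
  calc ‖x - u‖ ^ 2 + c ≤ ‖x - u‖ ^ 2 + (1 + ε) * ‖(v - u) - (x - u)‖ ^ 2 := by
        rw [← hsub]; gcongr
    _ ≤ (1 + ε) * ‖v - u‖ ^ 2 := sq_norm_add_mul_sq_norm_sub_le hε0 hε3 hxv hinner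
termination_by (P.filter (fun p => ‖v - p‖ < ‖v - u‖)).card
decreasing_by exact card_filter_lt_lt_of_lt hxP hcloser

end Yao

section Cones

variable {V κ : Type*} [SeminormedAddCommGroup V]

-- An empty cone gets the witness `u` itself, i.e. a harmless loop `(u, u)`.
lemma exists_nearest_of_code (P : Finset V) (φ : V → κ) (u : V) (g : κ) :
    ∃ x, (x = u ∨ x ∈ P) ∧ ∀ v ∈ P, v ≠ u → φ (v - u) = g →
      x ≠ u ∧ φ (x - u) = g ∧ ‖x - u‖ ≤ ‖v - u‖ := by
  classical
  set cone := P.filter fun v => v ≠ u ∧ φ (v - u) = g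
  rcases cone.eq_empty_or_nonempty with hempty | hne
  · refine ⟨u, Or.inl rfl, fun v hv hvu hvg => ?_⟩
    have : v ∈ cone := Finset.mem_filter.2 ⟨hv, hvu, hvg⟩
    simp [hempty] at this
  · obtain ⟨x, hx, hmin⟩ := cone.exists_min_image (fun v => ‖v - u‖) hne
    obtain ⟨hxP, hxu, hxg⟩ := Finset.mem_filter.1 hx
    exact ⟨x, Or.inr hxP, fun v hv hvu hvg =>
      ⟨hxu, hxg, hmin v (Finset.mem_filter.2 ⟨hv, hvu, hvg⟩)⟩⟩

theorem exists_edges_to_nearest_in_cones (P : Finset V) (φ : V → κ) (K : Finset κ)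
    (hφ : ∀ y, φ y ∈ K) :
    ∃ E : Finset (V × V), (∀ e ∈ E, e.1 ∈ P ∧ e.2 ∈ P) ∧ E.card ≤ P.card * K.card ∧
      ∀ u ∈ P, ∀ v ∈ P, v ≠ u → ∃ x ∈ P, x ≠ u ∧ (u, x) ∈ E ∧
        φ (x - u) = φ (v - u) ∧ ‖x - u‖ ≤ ‖v - u‖ := by
  classical
  choose nearest hnearest_mem hnearest using exists_nearest_of_code P φ
  refine ⟨P.biUnion fun u => K.image fun g => (u, nearest u g), ?_, ?_, ?_⟩
  · simp only [Finset.mem_biUnion, Finset.mem_image]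
    rintro _ ⟨u, hu, g, -, rfl⟩
    rcases hnearest_mem u g with h | h
    · exact ⟨hu, by simpa [h] using hu⟩
    · exact ⟨hu, h⟩
  · calc _ ≤ ∑ u ∈ P, (K.image fun g => (u, nearest u g)).card := Finset.card_biUnion_le
      _ ≤ ∑ _u ∈ P, K.card := Finset.sum_le_sum fun _ _ => Finset.card_image_le
      _ = P.card * K.card := by rw [Finset.sum_const, smul_eq_mul]
  · intro u hu v hv hvu
    obtain ⟨hxu, hcode, hle⟩ := hnearest u _ v hv hvu rfl
    refine ⟨nearest u (φ (v - u)), (hnearest_mem u _).resolve_left hxu, hxu, ?_, hcode, hle⟩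
    exact Finset.mem_biUnion.2 ⟨u, hu, Finset.mem_image.2 ⟨_, hφ _, rfl⟩⟩

end Cones

section DirectionCode

variable {ι : Type*} [Fintype ι]

def dirCode (M : ℕ) (y : EuclideanSpace ℝ ι) : ι → ℤ := fun i => ⌊M * y i / ‖y‖⌋

lemma dirCode_mem_piFinset [DecidableEq ι] (M : ℕ) (y : EuclideanSpace ℝ ι) :
    dirCode M y ∈ Fintype.piFinset fun _ : ι => Finset.Icc (-(M : ℤ)) M := by
  rw [Fintype.mem_piFinset]
  intro i
  have hbound : |M * y i / ‖y‖| ≤ M := by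
    rw [abs_div, abs_mul, abs_norm, Nat.abs_cast]
    rcases (norm_nonneg y).eq_or_lt with hy | hy
    · simp [← hy]
    · rw [div_le_iff₀ hy]
      exact mul_le_mul_of_nonneg_left (by simpa using PiLp.norm_apply_le y i) (Nat.cast_nonneg M)
  rw [Finset.mem_Icc, dirCode]
  constructor
  · exact Int.le_floor.2 (by push_cast; linarith [neg_abs_le (M * y i / ‖y‖)])
  · exact (Int.floor_le_floor ((le_abs_self _).trans hbound)).trans (Int.floor_natCast M).le

lemma card_piFinset_Icc [DecidableEq ι] (M : ℕ) :
    (Fintype.piFinset fun _ : ι => Finset.Icc (-(M : ℤ)) M).card =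
      (2 * M + 1) ^ Fintype.card ι := by
  rw [Fintype.card_piFinset, Int.card_Icc, Finset.prod_const, Finset.card_univ]
  congr 1
  omega

lemma inner_ge_of_dirCode_eq {M : ℕ} (hM : 0 < M) {ε : ℝ} (hMε : 4 * Fintype.card ι ≤ ε * M ^ 2)
    {x y : EuclideanSpace ℝ ι} (h : dirCode M x = dirCode M y) :
    (1 - ε / 8) * (‖x‖ * ‖y‖) ≤ inner ℝ x y := by
  suffices hkey : 2 * M ^ 2 * (‖x‖ * ‖y‖ - inner ℝ x y) ≤ Fintype.card ι * (‖x‖ * ‖y‖) by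
    have hM2 : (0 : ℝ) < M ^ 2 := by positivity
    have hxy : 0 ≤ ‖x‖ * ‖y‖ := by positivity
    nlinarith [mul_le_mul_of_nonneg_right hMε hxy]
  rcases eq_or_ne x 0 with rfl | hx
  · simp
  rcases eq_or_ne y 0 with rfl | hy
  · simp
  have hx0 : 0 < ‖x‖ := norm_pos_iff.2 hx
  have hy0 : 0 < ‖y‖ := norm_pos_iff.2 hy
  set x' : EuclideanSpace ℝ ι := ‖x‖⁻¹ • x
  set y' : EuclideanSpace ℝ ι := ‖y‖⁻¹ • y
  have hcoord : ∀ i, (M * (x' i - y' i)) ^ 2 ≤ 1 := fun i => by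
    have hfloor := Int.abs_sub_lt_one_of_floor_eq_floor (congrFun h i)
    rw [sq_le_one_iff_abs_le_one]
    convert hfloor.le using 2
    simp only [x', y', PiLp.smul_apply, smul_eq_mul]
    ring
  have hdist : M ^ 2 * ‖x' - y'‖ ^ 2 ≤ Fintype.card ι := by
    rw [EuclideanSpace.real_norm_sq_eq, Finset.mul_sum]
    calc _ ≤ ∑ _i : ι, (1 : ℝ) := Finset.sum_le_sum fun i _ => by
            simpa [mul_pow] using hcoord i
      _ = Fintype.card ι := by simp
  have hnorm : ‖x' - y'‖ ^ 2 * (‖x‖ * ‖y‖) = 2 * (‖x‖ * ‖y‖ - inner ℝ x y) := by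
    have hx1 : ‖x'‖ = 1 := by simp [x', norm_smul, hx0.ne']
    have hy1 : ‖y'‖ = 1 := by simp [y', norm_smul, hy0.ne']
    rw [norm_sub_sq_real, hx1, hy1, real_inner_smul_left, real_inner_smul_right]
    field_simp
    ring
  calc 2 * M ^ 2 * (‖x‖ * ‖y‖ - inner ℝ x y) = M ^ 2 * ‖x' - y'‖ ^ 2 * (‖x‖ * ‖y‖) := by
        rw [mul_assoc _ _ (‖x‖ * ‖y‖), hnorm]; ring
    _ ≤ Fintype.card ι * (‖x‖ * ‖y‖) := by gcongr

end DirectionCode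

lemma exists_mesh_size (n : ℕ) {ε : ℝ} (hε0 : 0 < ε) (hε1 : ε ≤ 1) :
    ∃ M : ℕ, 0 < M ∧ 4 * n ≤ ε * M ^ 2 ∧ (2 * M + 1 : ℝ) ≤ (4 * √n + 5) / √ε := by
  have hs0 : 0 < √ε := Real.sqrt_pos.2 hε0
  have hs1 : √ε ≤ 1 := Real.sqrt_le_one.2 hε1
  have hn0 : 0 ≤ √n := Real.sqrt_nonneg n
  set M := ⌈(2 * √n + 1) / √ε⌉₊
  have hMge : (2 * √n + 1) / √ε ≤ M := Nat.le_ceil _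
  have hMlt : (M : ℝ) < (2 * √n + 1) / √ε + 1 := Nat.ceil_lt_add_one (by positivity)
  rw [div_le_iff₀ hs0] at hMge
  refine ⟨M, Nat.ceil_pos.2 (by positivity), ?_, ?_⟩
  · have h2 : 2 * √n ≤ M * √ε := by linarith
    calc (4 * n : ℝ) = (2 * √n) ^ 2 := by rw [mul_pow, Real.sq_sqrt n.cast_nonneg]; norm_num
      _ ≤ (M * √ε) ^ 2 := by gcongr
      _ = ε * M ^ 2 := by rw [mul_pow, Real.sq_sqrt hε0.le, mul_comm]
  · have hMlt' : (M - 1 : ℝ) * √ε < 2 * √n + 1 := by rw [← lt_div_iff₀ hs0]; linarith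
    rw [le_div_iff₀ hs0]
    linarith

lemma div_sqrt_pow_eq {ε : ℝ} (hε : 0 ≤ ε) (c : ℝ) (n : ℕ) :
    (c / √ε) ^ n = c ^ n * ε ^ (-(n : ℝ) / 2) := by
  rw [div_pow, Real.sqrt_eq_rpow, ← Real.rpow_natCast (ε ^ _) n, ← Real.rpow_mul hε,
    div_eq_mul_inv, ← Real.rpow_neg hε]
  ring_nf

/-- For every dimension `d` there is a constant `C = C(d)` such that for every
finite `P ⊆ ℝ^d` with `n` points and every `ε ∈ (0,1)`, there is a set `E` of at most
`C ⬝ n ⬝ ε^{-d/2}` pairs of points of `P` such that the graph `(P, E)` with squared Euclidean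
edge weights is a `(1 + ε)`-spanner of the edge-squared metric on `P`. -/
theorem edgeSq_spanner_exists (d : ℕ) :
    ∃ C : ℝ, 0 < C ∧ ∀ (P : Finset (Pt d)) (ε : ℝ), 0 < ε → ε < 1 →
      ∃ E : Finset (Pt d × Pt d),
        (∀ e ∈ E, e.1 ∈ P ∧ e.2 ∈ P) ∧
        (E.card : ℝ) ≤ C * P.card * ε ^ (-(d : ℝ) / 2) ∧
        ∀ a ∈ P, ∀ b ∈ P,
          edgeSq ↑P a b ≤ spanDist ↑E (fun u v => ‖u - v‖ ^ 2) a b ∧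
          spanDist ↑E (fun u v => ‖u - v‖ ^ 2) a b ≤ (1 + ε) * edgeSq ↑P a b := by
  refine ⟨(4 * √d + 5) ^ d, by positivity, fun P ε hε0 hε1 => ?_⟩
  obtain ⟨M, hM0, hMε, hMsize⟩ := exists_mesh_size d hε0 hε1.le
  obtain ⟨E, hEP, hEcard, hcone⟩ :=
    exists_edges_to_nearest_in_cones P (dirCode M) _ (dirCode_mem_piFinset M)
  have hpair : ∀ u ∈ P, ∀ v ∈ P, ∃ c ∈ walkCosts (E : Set (Pt d × Pt d))
      (fun u v => ‖u - v‖ ^ 2) u v, c ≤ (1 + ε) * ‖v - u‖ ^ 2 := by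
    refine fun u hu v hv => exists_walkCosts_le_of_cone_cover hε0.le (by linarith)
      (fun u hu v hv hvu => ?_) hu hv
    obtain ⟨x, hxP, hxu, hxE, hcode, hle⟩ := hcone u hu v hv hvu
    exact ⟨x, hxP, hxu, hxE, hle,
      inner_ge_of_dirCode_eq hM0 (by simpa using hMε) hcode.symm⟩
  refine ⟨E, hEP, ?_, fun a ha b hb => ⟨?_, ?_⟩⟩
  · rw [card_piFinset_Icc, Fintype.card_fin] at hEcard
    calc (E.card : ℝ) ≤ P.card * (2 * M + 1 : ℝ) ^ d := by exact_mod_cast hEcard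
      _ ≤ P.card * ((4 * √d + 5) / √ε) ^ d := by gcongr
      _ = (4 * √d + 5) ^ d * P.card * ε ^ (-(d : ℝ) / 2) := by
        rw [div_sqrt_pow_eq hε0.le]; ring
  · obtain ⟨c, hc, -⟩ := hpair a ha b hb
    exact edgeSq_le_spanDist hEP ha ⟨c, hc⟩
  · exact spanDist_le_mul_edgeSq (fun u v => by positivity) (by linarith) hpair ha hb
end
end
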